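/- Let b^(10) = [[0,0,0,0],[1,1,0,0],[0,0,1,1],[0,0,0,0]] and I the 2×2 identity, over the rational function field in ξ_α, ξ_β, ξ_γ. Define R_{βα} = −(I⊗I − ξ_α b^(10))⁻¹(I⊗I − ξ_β b^(10)), and similarly R_{γα}, R_{γβ}. Then the Yang–Baxter equation (R_{γβ}⊗I)(I⊗R_{γα})(R_{βα}⊗I) = (I⊗R_{βα})(R_{γα}⊗I)(I⊗R_{γβ}) holds as an identity of 8×8 matrices. -/
import Mathlib


open Matrix

noncomputable section

/-- The field of rational functions in the three spectral parameters `ξ_α, ξ_β, ξ_γ`. -/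
abbrev KK : Type := FractionRing (MvPolynomial (Fin 3) ℚ)

/-- The spectral parameters `ξ 0 = ξ_α`, `ξ 1 = ξ_β`, `ξ 2 = ξ_γ` as elements of `KK`. -/
def xi (i : Fin 3) : KK := algebraMap (MvPolynomial (Fin 3) ℚ) KK (MvPolynomial.X i)

/-- Reindexing of a 4×4 matrix by pairs, lexicographically: 0↦11, 1↦12, 2↦21, 3↦22. -/
def toPairs (M : Matrix (Fin 4) (Fin 4) KK) :
    Matrix (Fin 2 × Fin 2) (Fin 2 × Fin 2) KK :=
  Matrix.reindex finProdFinEquiv.symm finProdFinEquiv.symm M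

/-- The matrix `b^(10)` of Alimohammadi–Ahmadi. -/
def bmat : Matrix (Fin 2 × Fin 2) (Fin 2 × Fin 2) KK :=
  toPairs !![0,0,0,0; 1,1,0,0; 0,0,1,1; 0,0,0,0]

/-- The scattering matrix `R_{βα} = −(I⊗I − ξ_α b)⁻¹ (I⊗I − ξ_β b)`
(here `1` is the 4×4 identity `I⊗I`). -/
def R (β α : Fin 3) : Matrix (Fin 2 × Fin 2) (Fin 2 × Fin 2) KK :=
  -((1 - xi α • bmat)⁻¹ * (1 - xi β • bmat))

/-- `A ⊗ I` acting on the first two tensor factors of `(ℂ²)^{⊗3}`. -/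
def legL (A : Matrix (Fin 2 × Fin 2) (Fin 2 × Fin 2) KK) :
    Matrix (Fin 2 × Fin 2 × Fin 2) (Fin 2 × Fin 2 × Fin 2) KK :=
  Matrix.of fun p q => A (p.1, p.2.1) (q.1, q.2.1) * (if p.2.2 = q.2.2 then 1 else 0)

/-- `I ⊗ A` acting on the last two tensor factors of `(ℂ²)^{⊗3}`. -/
def legR (A : Matrix (Fin 2 × Fin 2) (Fin 2 × Fin 2) KK) :
    Matrix (Fin 2 × Fin 2 × Fin 2) (Fin 2 × Fin 2 × Fin 2) KK :=
  Matrix.of fun p q => (if p.1 = q.1 then 1 else 0) * A (p.2.1, p.2.2) (q.2.1, q.2.2)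


lemma bsq : bmat * bmat = bmat := by
  ext ⟨i,j⟩ ⟨k,l⟩
  fin_cases i <;> fin_cases j <;> fin_cases k <;> fin_cases l <;>
    simp [bmat, toPairs, Matrix.mul_apply, Fintype.sum_prod_type, Fin.sum_univ_succ,
      finProdFinEquiv, Matrix.vecHead, Matrix.vecTail]

lemma xine (i : Fin 3) : (1:KK) - xi i ≠ 0 := by
  rw [sub_ne_zero]
  intro h
  have h2 : (MvPolynomial.X i : MvPolynomial (Fin 3) ℚ) = 1 :=
    IsFractionRing.injective (MvPolynomial (Fin 3) ℚ) KK (by simpa [xi] using h.symm)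
  have := congrArg MvPolynomial.constantCoeff h2
  simp at this

set_option maxHeartbeats 1000000 in
lemma inv_one_sub (a : KK) (h : (1:KK) - a ≠ 0) :
    (1 - a • bmat)⁻¹ = 1 + (a / (1 - a)) • bmat := by
  apply Matrix.inv_eq_right_inv
  have e1 : (1 - a • bmat) * (1 + (a/(1-a)) • bmat)
      = 1 + (a/(1-a) - (a + a/(1-a) * a)) • bmat := by
    simp only [sub_mul, mul_add, one_mul, mul_one, smul_mul_assoc, mul_smul_comm,
      smul_smul, smul_sub, smul_add, bsq, sub_smul, add_smul]
    abel
  rw [e1]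
  have e2 : a/(1-a) - (a + a/(1-a) * a) = 0 := by field_simp; ring
  rw [e2, zero_smul, add_zero]

set_option maxHeartbeats 1000000 in
lemma Rval (β α : Fin 3) :
    R β α = -(1 + ((xi α - xi β) / (1 - xi α)) • bmat) := by
  unfold R
  rw [inv_one_sub _ (xine α)]
  congr 1
  have e1 : (1 + (xi α/(1 - xi α)) • bmat) * (1 - xi β • bmat)
      = 1 + (xi α/(1 - xi α) - (xi β + xi β * (xi α/(1 - xi α)))) • bmat := by
    simp only [mul_sub, add_mul, one_mul, mul_one, smul_mul_assoc, mul_smul_comm,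
      smul_smul, smul_sub, smul_add, bsq, sub_smul, add_smul]
    abel
  rw [e1]
  have e2 : xi α/(1 - xi α) - (xi β + xi β * (xi α/(1 - xi α)))
      = (xi α - xi β) / (1 - xi α) := by
    field_simp [xine α]
    ring
  rw [e2]

lemma legL_one : legL 1 = 1 := by
  ext ⟨i, j, k⟩ ⟨a, b, c⟩
  simp [legL, Matrix.one_apply, Prod.ext_iff]
  split_ifs <;> simp_all

lemma legR_one : legR 1 = 1 := by
  ext ⟨i, j, k⟩ ⟨a, b, c⟩
  simp [legR, Matrix.one_apply, Prod.ext_iff]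
  split_ifs <;> simp_all

lemma legL_add (A B) : legL (A + B) = legL A + legL B := by
  ext p q; simp [legL, add_mul]; split <;> simp

lemma legR_add (A B) : legR (A + B) = legR A + legR B := by
  ext p q; simp [legR, mul_add]

lemma legL_smul (c : KK) (A) : legL (c • A) = c • legL A := by
  ext p q; simp [legL, mul_assoc]

lemma legR_smul (c : KK) (A) : legR (c • A) = c • legR A := by
  ext p q; simp [legR]

lemma legL_neg (A) : legL (-A) = -legL A := by
  ext p q; simp [legL]; split <;> simp

lemma legR_neg (A) : legR (-A) = -legR A := by
  ext p q; simp [legR]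

lemma legL_mul (A B) : legL (A * B) = legL A * legL B := by
  ext ⟨i, j, k⟩ ⟨a, b, c⟩
  simp [legL, Matrix.mul_apply, Fintype.sum_prod_type, mul_ite, ite_mul]

lemma legR_mul (A B) : legR (A * B) = legR A * legR B := by
  ext ⟨i, j, k⟩ ⟨a, b, c⟩
  simp [legR, Matrix.mul_apply, Fintype.sum_prod_type, mul_ite, ite_mul]

set_option maxHeartbeats 2000000 in
lemma braid :
    legL bmat * legR bmat * legL bmat = legR bmat * legL bmat * legR bmat := by
  ext ⟨i, j, k⟩ ⟨a, b, c⟩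
  fin_cases i <;> fin_cases j <;> fin_cases k <;> fin_cases a <;> fin_cases b <;> fin_cases c <;>
    simp [legL, legR, bmat, toPairs, Matrix.mul_apply, Fintype.sum_prod_type,
      Fin.sum_univ_succ, finProdFinEquiv, Matrix.vecHead, Matrix.vecTail]

lemma hLL : legL bmat * legL bmat = legL bmat := by rw [← legL_mul, bsq]
lemma hRR : legR bmat * legR bmat = legR bmat := by rw [← legR_mul, bsq]

set_option maxHeartbeats 1000000 in
lemma expand3 {n : Type*} [Fintype n] [DecidableEq n] (L R : Matrix n n KK)
    (hL : L * L = L) (s t u : KK) :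
    (1 + s • L) * (1 + t • R) * (1 + u • L)
      = 1 + (s + u + u * s) • L + t • R + (t * s) • (L * R) + (u * t) • (R * L)
        + (u * (t * s)) • (L * R * L) := by
  simp only [add_mul, mul_add, one_mul, mul_one, smul_mul_assoc, mul_smul_comm,
    smul_smul, smul_add, hL, add_smul, mul_assoc]
  abel

lemma yb_core (t1 t2 t3 : KK) (h : t3 + t1 + t1 * t3 = t2) :
    legL (-(1 + t3 • bmat)) * legR (-(1 + t2 • bmat)) * legL (-(1 + t1 • bmat)) =
      legR (-(1 + t1 • bmat)) * legL (-(1 + t2 • bmat)) * legR (-(1 + t3 • bmat)) := by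
  simp only [legL_neg, legR_neg, legL_add, legR_add, legL_one, legR_one, legL_smul,
    legR_smul, neg_mul, mul_neg, neg_neg]
  rw [expand3 (legL bmat) (legR bmat) hLL, expand3 (legR bmat) (legL bmat) hRR, braid]
  rw [show t3 + t1 + t1 * t3 = t2 from h,
    show t1 + t3 + t3 * t1 = t2 from by rw [← h]; ring,
    show t2 * t3 = t3 * t2 from mul_comm _ _,
    show t1 * t2 = t2 * t1 from mul_comm _ _,
    show t1 * (t3 * t2) = t3 * (t2 * t1) from by ring]
  abel

/-- The Yang–Baxter equation for this interaction matrix: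
`(R_{γβ} ⊗ I)(I ⊗ R_{γα})(R_{βα} ⊗ I) = (I ⊗ R_{βα})(R_{γα} ⊗ I)(I ⊗ R_{γβ})`
with `α = 0`, `β = 1`, `γ = 2`. -/
theorem yang_baxter_b10 :
    legL (R 2 1) * legR (R 2 0) * legL (R 1 0) =
      legR (R 1 0) * legL (R 2 0) * legR (R 2 1) := by
  rw [Rval 2 1, Rval 2 0, Rval 1 0]
  exact yb_core _ _ _ (by field_simp [xine 0, xine 1]; ring)

end
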